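/- arXiv:2009.09854 — 3 statements merged into one kernel-verified Lean document; each statement's English description precedes it below -/
import Mathlib

section
/- The map ι₂(u,v) = (b v²(v+1)/(a u (b v + 1)), v) preserves the rational invariant F/G, where F(u,v) = v²(1+u+v) + au(u/b + uv + v²) and G(u,v) = uv; i.e., F(ι₂(u,v))·G(u,v) = F(u,v)·G(ι₂(u,v)) wherever defined. -/
noncomputable def Fcub {K : Type*} [Field K] (a b u v : K) : K :=
  v^2 * (1 + u + v) + a*u*(u/b + u*v + v^2)

def Gcub {K : Type*} [Field K] (u v : K) : K := u * v

noncomputable def iota2 {K : Type*} [Field K] (a b : K) (p : K × K) : K × K :=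
  (b * p.2^2 * (p.2 + 1) / (a * p.1 * (b * p.2 + 1)), p.2)

/-!
For fixed `v`, `F(u, v) = A u² + B u + C` is a quadratic in `u` with `A = a (b v + 1) / b`,
and `ι₂` replaces `u` by the other root `C / (A u)` of `A X² + (B - λ) X + C` (Vieta), where
`λ = F(u, v) / u`. Hence `F(u, v) / u` is unchanged, and so is `F / G = F / (u v)`.
-/

section

variable {K : Type*} [Field K]

theorem quadratic_vieta_partner_mul {A : K} (hA : A ≠ 0) (B C u : K) :
    (A * (C / (A * u)) ^ 2 + B * (C / (A * u)) + C) * u =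
      (A * u ^ 2 + B * u + C) * (C / (A * u)) := by
  rcases eq_or_ne u 0 with rfl | hu
  · simp
  · field_simp
    ring

theorem Fcub_eq_quadratic {a b : K} (hb : b ≠ 0) (u v : K) :
    Fcub a b u v = a * (b * v + 1) / b * u ^ 2 + (1 + a) * v ^ 2 * u + v ^ 2 * (v + 1) := by
  unfold Fcub
  field_simp
  ring

theorem iota2_eq_vieta_partner (a b u v : K) :
    iota2 a b (u, v) = (v ^ 2 * (v + 1) / (a * (b * v + 1) / b * u), v) := by
  rcases eq_or_ne b 0 with rfl | hb
  · simp [iota2]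
  · simp only [iota2, Prod.mk.injEq, and_true]
    field_simp

end

theorem iota2_preserves_invariant_general {K : Type*} [Field K] (a b u v : K)
    (ha : a ≠ 0) (hb : b ≠ 0) (hbv : b * v + 1 ≠ 0) :
    Fcub a b (iota2 a b (u, v)).1 (iota2 a b (u, v)).2 * Gcub u v =
      Fcub a b u v * Gcub (iota2 a b (u, v)).1 (iota2 a b (u, v)).2 := by
  have hA : a * (b * v + 1) / b ≠ 0 := div_ne_zero (mul_ne_zero ha hbv) hb
  have key := quadratic_vieta_partner_mul hA ((1 + a) * v ^ 2) (v ^ 2 * (v + 1)) u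
  simp only [Gcub, iota2_eq_vieta_partner]
  rw [Fcub_eq_quadratic hb, Fcub_eq_quadratic hb]
  linear_combination v * key

/-- ι₂ preserves the invariant F/G. -/
theorem iota2_preserves_invariant {K : Type*} [Field K] (a b u v : K)
    (ha : a ≠ 0) (hb : b ≠ 0) (hu : u ≠ 0) (hbv : b * v + 1 ≠ 0) :
    Fcub a b (iota2 a b (u, v)).1 (iota2 a b (u, v)).2 * Gcub u v =
      Fcub a b u v * Gcub (iota2 a b (u, v)).1 (iota2 a b (u, v)).2 :=
  iota2_preserves_invariant_general a b u v ha hb hbv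
end

section
/- The map ι₃(u,v) = ( vb(v+u+1)(u+v)/(buv + bv² + au + vb), au(u+v)/(buv + bv² + au + vb) ) is an involution on the set where its denominator (before and after application) is nonzero. -/
/-!
Write `s = u + v` and `D = Dden a b u v = b v (s + 1) + a u`. Then `ι₃(u, v)` has coordinate sum
`s (b v (s + 1) + a u) / D = s`, and its own denominator is `a b s² (s + 1) / D`. Substituting
these two facts into the formula for `ι₃` once more, every factor cancels and `(u, v)` comes back.
-/

def Dden {K : Type*} [Field K] (a b u v : K) : K := b*u*v + b*v^2 + a*u + b*v

noncomputable def iota3 {K : Type*} [Field K] (a b : K) (p : K × K) : K × K :=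
  (b * p.2 * (p.2 + p.1 + 1) * (p.1 + p.2) / Dden a b p.1 p.2,
   a * p.1 * (p.1 + p.2) / Dden a b p.1 p.2)

section

variable {K : Type*} [Field K] {a b : K}

theorem Dden_eq (a b u v : K) : Dden a b u v = b * v * (u + v + 1) + a * u := by
  unfold Dden
  ring

theorem iota3_eq_of_add_eq {p : K × K} {s D : K} (hs : p.1 + p.2 = s)
    (hD : Dden a b p.1 p.2 = D) :
    iota3 a b p = (b * p.2 * (s + 1) * s / D, a * p.1 * s / D) := by
  rw [iota3, add_comm p.2, hs, hD]

theorem iota3_fst_add_snd {u v : K} (hD : Dden a b u v ≠ 0) :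
    (iota3 a b (u, v)).1 + (iota3 a b (u, v)).2 = u + v := by
  rw [iota3_eq_of_add_eq rfl rfl]
  dsimp only
  rw [← add_div, div_eq_iff hD, Dden_eq]
  ring

theorem Dden_iota3 {u v : K} (hD : Dden a b u v ≠ 0) :
    Dden a b (iota3 a b (u, v)).1 (iota3 a b (u, v)).2
      = a * b * (u + v) ^ 2 * (u + v + 1) / Dden a b u v := by
  rw [Dden_eq, iota3_fst_add_snd hD, iota3_eq_of_add_eq rfl rfl]
  dsimp only
  rw [Dden_eq] at hD ⊢
  field_simp

end

theorem iota3_involution_general {K : Type*} [Field K] (a b u v : K)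
    (hD : Dden a b u v ≠ 0)
    (hD' : Dden a b (iota3 a b (u, v)).1 (iota3 a b (u, v)).2 ≠ 0) :
    iota3 a b (iota3 a b (u, v)) = (u, v) := by
  rw [Dden_iota3 hD] at hD'
  simp only [div_ne_zero_iff, mul_ne_zero_iff, pow_ne_zero_iff two_ne_zero] at hD'
  obtain ⟨⟨⟨⟨ha, hb⟩, hs⟩, hs1⟩, -⟩ := hD'
  rw [iota3_eq_of_add_eq (iota3_fst_add_snd hD) (Dden_iota3 hD), iota3_eq_of_add_eq rfl rfl]
  ext <;> field_simp

/-- ι₃ is an involution where the denominator is nonzero before and after. -/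
theorem iota3_involution {K : Type*} [Field K] (a b u v : K)
    (ha : a ≠ 0) (hb : b ≠ 0)
    (hD : Dden a b u v ≠ 0)
    (hD' : Dden a b (iota3 a b (u, v)).1 (iota3 a b (u, v)).2 ≠ 0) :
    iota3 a b (iota3 a b (u, v)) = (u, v) :=
  iota3_involution_general a b u v hD hD'
end

section
/- The map ι₄(u,v) = ( vb(au+v+1)(au+v)/(a(abuv + bv² + vb + u)), u(au+v)/(abuv + bv² + vb + u) ) is an involution wherever defined. -/
def Eden {K : Type*} [Field K] (a b u v : K) : K := a*b*u*v + b*v^2 + b*v + u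

noncomputable def iota4 {K : Type*} [Field K] (a b : K) (p : K × K) : K × K :=
  (b * p.2 * (a*p.1 + p.2 + 1) * (a*p.1 + p.2) / (a * Eden a b p.1 p.2),
   p.1 * (a*p.1 + p.2) / Eden a b p.1 p.2)

set_option maxHeartbeats 1000000 in
/-- ι₄ is an involution wherever defined. -/
theorem iota4_involution {K : Type*} [Field K] (a b u v : K)
    (ha : a ≠ 0) (hb : b ≠ 0)
    (hE : Eden a b u v ≠ 0)
    (hE' : Eden a b (iota4 a b (u, v)).1 (iota4 a b (u, v)).2 ≠ 0) :
    iota4 a b (iota4 a b (u, v)) = (u, v) := by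
  have h1 : iota4 a b (u, v) =
      (b*v*(a*u+v+1)*(a*u+v)/(a*Eden a b u v), u*(a*u+v)/(Eden a b u v)) := rfl
  rw [h1] at hE' ⊢
  obtain ⟨E, hEdef⟩ : ∃ E, Eden a b u v = E := ⟨_, rfl⟩
  rw [hEdef] at hE hE' ⊢
  obtain ⟨s, hsdef⟩ : ∃ s, a*u+v = s := ⟨_, rfl⟩
  rw [hsdef] at hE' ⊢
  have hE1 : E = b*v*(s+1) + u := by rw [← hEdef, ← hsdef, Eden]; ring
  have hne : a*E*E*E^2*E ≠ 0 :=
    mul_ne_zero (mul_ne_zero (mul_ne_zero (mul_ne_zero ha hE) hE) (pow_ne_zero 2 hE)) hE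
  have key2 : a * (b*v*(s+1)*s/(a*E)) + u*s/E = s := by
    field_simp
    subst hE1 hsdef
    ring
  have key3 : Eden a b (b*v*(s+1)*s/(a*E)) (u*s/E) = b*s^2*(s+1)/(a*E) := by
    rw [Eden]
    field_simp
    subst hE1 hsdef
    ring
  rw [key3] at hE'
  have hs : s ≠ 0 := by
    intro h; apply hE'; rw [h]; simp
  have hs1 : s + 1 ≠ 0 := by
    intro h; apply hE'; rw [h]; simp
  have h2 : iota4 a b (b*v*(s+1)*s/(a*E), u*s/E) =
      (b*(u*s/E)*(a*(b*v*(s+1)*s/(a*E)) + u*s/E + 1)*(a*(b*v*(s+1)*s/(a*E)) + u*s/E)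
        / (a * Eden a b (b*v*(s+1)*s/(a*E)) (u*s/E)),
       (b*v*(s+1)*s/(a*E))*(a*(b*v*(s+1)*s/(a*E)) + u*s/E)
        / Eden a b (b*v*(s+1)*s/(a*E)) (u*s/E)) := rfl
  rw [h2, key2, key3]
  have hd : b*s^2*(s+1)/(a*E) ≠ 0 :=
    div_ne_zero (mul_ne_zero (mul_ne_zero hb (pow_ne_zero 2 hs)) hs1) (mul_ne_zero ha hE)
  refine Prod.ext ?_ ?_
  · show b*(u*s/E)*(s+1)*s / (a*(b*s^2*(s+1)/(a*E))) = u
    rw [div_eq_iff (mul_ne_zero ha hd)]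
    field_simp
  · show (b*v*(s+1)*s/(a*E))*s / (b*s^2*(s+1)/(a*E)) = v
    rw [div_eq_iff hd]
    field_simp
end
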